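/- arXiv:1004.3655 — 4 statements merged into one kernel-verified Lean document; each statement's English description precedes it below -/
import Mathlib

section
/- For every finiteness space 𝒜, the set {ā ⊆ M(|𝒜|) : ⋃_{μ ∈ ā} supp(μ) ∈ F(𝒜)} is a finiteness structure on M(|𝒜|) (so !𝒜 is a finiteness space), and moreover it equals ({a^! : a ∈ F(𝒜)})^⊥⊥. -/
/-!
A set of multisets whose supports have finitary union `a` lies inside `a^!`, which gives one
inclusion. For the converse, take `s` in the bidual of the `a^!` and `b` in the dual of `F(𝒜)`.
Choosing for each `x ∈ b` covered by `s` one multiset of `s` containing `x` gives `t ⊆ s` meeting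
every `a^!` in a finite set, since `a ∩ b` is finite. So `t = t ∩ s` is finite, and `b` meets the
supports of `s` only in the finitely many points of the supports of `t`. Finally, a bidual is
closed because `F^⊥⊥⊥ = F^⊥`.
-/

open Set

namespace FinitenessPaper

/-- The predual of a set `F` of subsets of `A`:
all subsets of `A` whose intersection with every member of `F` is finite. -/
def predual {α : Type*} (A : Set α) (F : Set (Set α)) : Set (Set α) :=
  {a' | a' ⊆ A ∧ ∀ a ∈ F, (a ∩ a').Finite}

/-- A finiteness space: a web together with a finiteness structure on it. -/
structure FinSpace (α : Type*) where
  web : Set α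
  fin : Set (Set α)
  isFin : predual web (predual web fin) = fin

/-- `M(a)`: the set of finite multisets all of whose elements lie in `a`. -/
def bangSet {α : Type*} (a : Set α) : Set (Multiset α) := {μ | ∀ x ∈ μ, x ∈ a}

section Predual

variable {α : Type*} {A : Set α} {F : Set (Set α)}

lemma mem_predual_predual_of_subset {s a : Set α} (hsA : s ⊆ A) (ha : a ∈ F) (hsa : s ⊆ a) :
    s ∈ predual A (predual A F) :=
  ⟨hsA, fun _ hb => (hb.2 a ha).subset fun _ hx => ⟨hsa hx.2, hx.1⟩⟩

lemma predual_predual_predual : predual A (predual A (predual A F)) = predual A F := by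
  refine Subset.antisymm (fun t ht => ⟨ht.1, fun a ha => ?_⟩)
    fun t ht => ⟨ht.1, fun a ha => ?_⟩
  · have hA : a ∩ A ∈ predual A (predual A F) :=
      mem_predual_predual_of_subset inter_subset_right ha inter_subset_left
    simpa [inter_assoc, inter_eq_self_of_subset_right ht.1] using ht.2 _ hA
  · rw [inter_comm]
    exact ha.2 t ht

end Predual

section UnionSupp

variable {α : Type*}

def unionSupp (s : Set (Multiset α)) : Set α := ⋃ μ ∈ s, {x | x ∈ μ}

lemma mem_unionSupp {s : Set (Multiset α)} {x : α} :
    x ∈ unionSupp s ↔ ∃ μ ∈ s, x ∈ μ := by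
  simp [unionSupp]

lemma unionSupp_subset_iff {s : Set (Multiset α)} {a : Set α} :
    unionSupp s ⊆ a ↔ s ⊆ bangSet a := by
  simp only [unionSupp, iUnion₂_subset_iff]
  rfl

lemma finite_unionSupp {s : Set (Multiset α)} (hs : s.Finite) : (unionSupp s).Finite :=
  hs.biUnion fun μ _ => μ.finite_toSet

lemma exists_subset_subset_unionSupp {s : Set (Multiset α)} {c : Set α}
    (hc : c ⊆ unionSupp s) :
    ∃ t ⊆ s, c ⊆ unionSupp t ∧
      ∀ a : Set α, (a ∩ c).Finite → (bangSet a ∩ t).Finite := by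
  have hchoice : ∀ x, ∃ μ : Multiset α, x ∈ c → μ ∈ s ∧ x ∈ μ := fun x => by
    by_cases hx : x ∈ c
    · obtain ⟨μ, hμ⟩ := mem_unionSupp.1 (hc hx)
      exact ⟨μ, fun _ => hμ⟩
    · exact ⟨0, fun h => absurd h hx⟩
  choose f hf using hchoice
  refine ⟨f '' c, image_subset_iff.2 fun x hx => (hf x hx).1,
    fun x hx => mem_unionSupp.2 ⟨f x, mem_image_of_mem f hx, (hf x hx).2⟩,
    fun a ha => (ha.image f).subset ?_⟩
  rintro _ ⟨hμa, x, hx, rfl⟩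
  exact mem_image_of_mem f ⟨hμa x (hf x hx).2, hx⟩

end UnionSupp

namespace FinSpace

variable {α : Type*} (A : FinSpace α)

/-- The finiteness structure of `!𝒜`. -/
def bangFin : Set (Set (Multiset α)) := {s | s ⊆ bangSet A.web ∧ unionSupp s ∈ A.fin}

lemma unionSupp_mem_fin_of_mem_predual_predual {s : Set (Multiset α)}
    (hs : s ∈ predual (bangSet A.web)
      (predual (bangSet A.web) {m | ∃ a ∈ A.fin, m = bangSet a})) :
    unionSupp s ∈ A.fin := by
  rw [← A.isFin]
  refine ⟨unionSupp_subset_iff.2 hs.1, fun b hb => ?_⟩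
  obtain ⟨t, hts, hbt, ht⟩ := exists_subset_subset_unionSupp (inter_subset_right (s := b))
  have ht_predual : t ∈ predual (bangSet A.web) {m | ∃ a ∈ A.fin, m = bangSet a} := by
    refine ⟨hts.trans hs.1, ?_⟩
    rintro _ ⟨a, ha, rfl⟩
    exact ht a ((hb.2 a ha).subset (inter_subset_inter_right a inter_subset_left))
  have ht_finite : t.Finite := by
    simpa [inter_eq_self_of_subset_left hts] using hs.2 t ht_predual
  exact (finite_unionSupp ht_finite).subset hbt

lemma bangFin_eq_predual_predual :
    A.bangFin =
      predual (bangSet A.web) (predual (bangSet A.web) {m | ∃ a ∈ A.fin, m = bangSet a}) := by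
  refine Subset.antisymm (fun s hs => ?_) fun s hs =>
    ⟨hs.1, A.unionSupp_mem_fin_of_mem_predual_predual hs⟩
  exact mem_predual_predual_of_subset hs.1 ⟨_, hs.2, rfl⟩ (unionSupp_subset_iff.1 subset_rfl)

end FinSpace

/-- The exponential: `{ā ⊆ M(|𝒜|) : ⋃_{μ ∈ ā} supp μ ∈ F(𝒜)}` is a finiteness
structure on `M(|𝒜|)`, and it equals `({a^! : a ∈ F(𝒜)})^⊥⊥`. -/
theorem bang_finiteness_structure {α : Type*} (A : FinSpace α) :
    (predual (bangSet A.web) (predual (bangSet A.web)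
        {s | s ⊆ bangSet A.web ∧ (⋃ μ ∈ s, {x : α | x ∈ μ}) ∈ A.fin})
      = {s | s ⊆ bangSet A.web ∧ (⋃ μ ∈ s, {x : α | x ∈ μ}) ∈ A.fin}) ∧
    {s | s ⊆ bangSet A.web ∧ (⋃ μ ∈ s, {x : α | x ∈ μ}) ∈ A.fin}
      = predual (bangSet A.web) (predual (bangSet A.web)
          {m | ∃ a ∈ A.fin, m = bangSet a}) := by
  have key := A.bangFin_eq_predual_predual
  refine ⟨?_, key⟩
  change predual _ (predual _ A.bangFin) = A.bangFin
  rw [key, predual_predual_predual]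

end FinitenessPaper
end

section
/- If (𝒜_n)_{n∈ℕ} is an extension sequence of finiteness spaces, i.e. 𝒜_n ≼ 𝒜_{n+1} for all n, then ⋃_{n∈ℕ} F(𝒜_n) is a finiteness structure on ⋃_{n∈ℕ} |𝒜_n|; that is, the ⊑-supremum ⊔_n 𝒜_n is exact. -/
/-!
Since `𝒜ₙ ≼ 𝒜ₘ` for `n ≤ m`, the webs increase and `F(𝒜ₙ)` is the trace of `F(𝒜ₘ)` on `|𝒜ₙ|`.
Let `W = ⋃ₙ |𝒜ₙ|` and `F = ⋃ₙ F(𝒜ₙ)`, and let `a ∈ F^⊥⊥`. First, `a` lies in a single web: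
otherwise pick `xₙ ∈ a \ |𝒜ₙ|`; every member of `F(𝒜ₙ)` meets `{xₖ}` only in `{xₖ | k < n}`, so
`{xₖ} ∈ F^⊥`, hence `{xₖ} = a ∩ {xₖ}` is finite and lies in some `|𝒜_N|`, which misses `x_N`.
Second, if `a ⊆ |𝒜ₙ|` then `F(𝒜ₙ)^⊥ ⊆ F^⊥`, because every `c ∈ F` has trace `c ∩ |𝒜ₙ| ∈ F(𝒜ₙ)`;
so `a ∈ F(𝒜ₙ)^⊥⊥ = F(𝒜ₙ)`.
-/

open Set

namespace FinitenessPaper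

/-- Finiteness extension order: `A ≼ B` iff `|A| ⊆ |B|` and
`F(A) = F(B) ∩ 𝒫(|A|)`. -/
def fsExt {α : Type*} (A B : FinSpace α) : Prop :=
  A.web ⊆ B.web ∧ A.fin = {a ∈ B.fin | a ⊆ A.web}

section

variable {α : Type*}

section Predual

variable {A B : Set α} {F G : Set (Set α)} {a : Set α}

lemma predual_anti (hFG : F ⊆ G) : predual A G ⊆ predual A F :=
  fun _ ha => ⟨ha.1, fun c hc => ha.2 c (hFG hc)⟩

lemma mem_predual_of_subset (ha : a ∈ predual B F) (haA : a ⊆ A) : a ∈ predual A F :=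
  ⟨haA, ha.2⟩

lemma subset_predual_predual (hF : ∀ c ∈ F, c ⊆ A) : F ⊆ predual A (predual A F) :=
  fun c hc => ⟨hF c hc, fun b hb => inter_comm c b ▸ hb.2 c hc⟩

end Predual

namespace FinSpace

variable {𝒜 : FinSpace α} {a b : Set α}

lemma subset_web (ha : a ∈ 𝒜.fin) : a ⊆ 𝒜.web := by
  rw [← 𝒜.isFin] at ha
  exact ha.1

lemma mem_fin_of_subset (ha : a ∈ 𝒜.fin) (hba : b ⊆ a) : b ∈ 𝒜.fin := by
  rw [← 𝒜.isFin] at ha ⊢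
  exact ⟨hba.trans ha.1, fun c hc => (ha.2 c hc).subset (inter_subset_inter_right c hba)⟩

end FinSpace

namespace fsExt

variable {𝒜 ℬ 𝒞 : FinSpace α}

lemma refl (𝒜 : FinSpace α) : fsExt 𝒜 𝒜 :=
  ⟨subset_rfl, ext fun _ => ⟨fun ha => ⟨ha, FinSpace.subset_web ha⟩, And.left⟩⟩

lemma trans (h₁ : fsExt 𝒜 ℬ) (h₂ : fsExt ℬ 𝒞) : fsExt 𝒜 𝒞 := by
  refine ⟨h₁.1.trans h₂.1, ext fun a => ?_⟩
  simp only [h₁.2, h₂.2, mem_sep_iff]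
  exact ⟨fun ⟨⟨ha, _⟩, haA⟩ => ⟨ha, haA⟩, fun ⟨ha, haA⟩ => ⟨⟨ha, haA.trans h₁.1⟩, haA⟩⟩

lemma fin_subset (h : fsExt 𝒜 ℬ) : 𝒜.fin ⊆ ℬ.fin := by
  rw [h.2]
  exact sep_subset _ _

lemma inter_web_mem_fin (h : fsExt 𝒜 ℬ) {c : Set α} (hc : c ∈ ℬ.fin) : c ∩ 𝒜.web ∈ 𝒜.fin := by
  rw [h.2]
  exact ⟨FinSpace.mem_fin_of_subset hc inter_subset_left, inter_subset_right⟩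

lemma of_le {𝒜 : ℕ → FinSpace α} (hext : ∀ n, fsExt (𝒜 n) (𝒜 (n + 1))) {n m : ℕ} (h : n ≤ m) :
    fsExt (𝒜 n) (𝒜 m) := by
  induction m, h using Nat.le_induction with
  | base => exact refl _
  | succ m _ ih => exact ih.trans (hext m)

end fsExt

lemma exists_subset_of_finite_of_subset_iUnion {S : ℕ → Set α} (hS : Monotone S) {s : Set α}
    (hs : s.Finite) (hsS : s ⊆ ⋃ n, S n) : ∃ n, s ⊆ S n := by
  rw [← hs.coe_toFinset] at hsS ⊢
  exact hS.directed_le.exists_mem_subset_of_finset_subset_biUnion hsS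

lemma exists_subset_of_mem_predual_predual {S : ℕ → Set α} (hS : Monotone S)
    {F : Set (Set α)} (hF : ∀ c ∈ F, ∃ n, c ⊆ S n) {a : Set α}
    (ha : a ∈ predual (⋃ n, S n) (predual (⋃ n, S n) F)) : ∃ n, a ⊆ S n := by
  by_contra! hne
  choose x hx_mem hxS using fun n => not_subset.1 (hne n)
  have hxa : range x ⊆ a := range_subset_iff.2 hx_mem
  have hx_dual : range x ∈ predual (⋃ n, S n) F := by
    refine ⟨hxa.trans ha.1, fun c hc => ?_⟩
    obtain ⟨n, hcS⟩ := hF c hc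
    refine ((finite_Iio n).image x).subset ?_
    rintro _ ⟨hkc, k, rfl⟩
    exact ⟨k, lt_of_not_ge fun hnk => hxS k (hS hnk (hcS hkc)), rfl⟩
  have hx_fin : (range x).Finite := inter_eq_left.2 hxa ▸ ha.2 _ hx_dual
  obtain ⟨N, hN⟩ := exists_subset_of_finite_of_subset_iUnion hS hx_fin (hxa.trans ha.1)
  exact hxS N (hN (mem_range_self N))

section ExtensionSequence

variable {𝒜 : ℕ → FinSpace α} (hext : ∀ n, fsExt (𝒜 n) (𝒜 (n + 1)))
include hext

lemma monotone_web : Monotone fun n => (𝒜 n).web :=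
  fun _ _ h => (fsExt.of_le hext h).1

lemma predual_fin_subset_predual_iUnion (n : ℕ) :
    predual (𝒜 n).web (𝒜 n).fin ⊆ predual (⋃ k, (𝒜 k).web) (⋃ k, (𝒜 k).fin) := by
  intro b hb
  refine ⟨hb.1.trans (subset_iUnion (fun k => (𝒜 k).web) n), fun c hc => ?_⟩
  obtain ⟨m, hcm⟩ := mem_iUnion.1 hc
  have hc_max : c ∈ (𝒜 (max n m)).fin := (fsExt.of_le hext (le_max_right n m)).fin_subset hcm
  have hc_trace := (fsExt.of_le hext (le_max_left n m)).inter_web_mem_fin hc_max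
  exact (hb.2 _ hc_trace).subset fun y ⟨hyc, hyb⟩ => ⟨⟨hyc, hb.1 hyb⟩, hyb⟩

lemma mem_fin_of_mem_predual_predual_iUnion {a : Set α} {n : ℕ} (han : a ⊆ (𝒜 n).web)
    (ha : a ∈ predual (⋃ k, (𝒜 k).web) (predual (⋃ k, (𝒜 k).web) (⋃ k, (𝒜 k).fin))) :
    a ∈ (𝒜 n).fin := by
  rw [← (𝒜 n).isFin]
  exact mem_predual_of_subset (predual_anti (predual_fin_subset_predual_iUnion hext n) ha) han

end ExtensionSequence

end

/-- If `(𝒜ₙ)` is an extension sequence (i.e. `𝒜ₙ ≼ 𝒜ₙ₊₁` for all `n`), then the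
union of the finiteness structures is a finiteness structure on the union of the
webs: the `⊑`-supremum of the sequence is exact. -/
theorem extension_sequence_sup_exact {α : Type*} (A : ℕ → FinSpace α)
    (hext : ∀ n, fsExt (A n) (A (n + 1))) :
    predual (⋃ n, (A n).web) (predual (⋃ n, (A n).web) (⋃ n, (A n).fin))
      = ⋃ n, (A n).fin := by
  refine Subset.antisymm (fun a ha => ?_) (subset_predual_predual fun c hc => ?_)
  · have hF : ∀ c ∈ ⋃ n, (A n).fin, ∃ n, c ⊆ (A n).web := fun c hc =>
      (mem_iUnion.1 hc).imp fun _ => FinSpace.subset_web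
    obtain ⟨n, han⟩ := exists_subset_of_mem_predual_predual (monotone_web hext) hF ha
    exact mem_iUnion.2 ⟨n, mem_fin_of_mem_predual_predual_iUnion hext han ha⟩
  · obtain ⟨n, hcn⟩ := mem_iUnion.1 hc
    exact (FinSpace.subset_web hcn).trans (subset_iUnion (fun k => (A k).web) n)

end FinitenessPaper
end

section
/- Transport functors are monotonic for both finiteness extension and finiteness inclusion: let T be an I-ary functor in Rel with ownership relation (own_i)_{i∈I}, and for a family (𝒜_i) of finiteness spaces write T^own((𝒜_i)) = (T((|𝒜_i|)_i), {â ⊆ T((|𝒜_i|)_i) : ∀i, own_i[â] ∈ F(𝒜_i)}). If 𝒜_i ⊑ ℬ_i for all i ∈ I then T^own((𝒜_i)) ⊑ T^own((ℬ_i)), and if 𝒜_i ≼ ℬ_i for all i ∈ I then T^own((𝒜_i)) ≼ T^own((ℬ_i)). -/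
open Set

namespace FinitenessPaper

/-- Direct image of a set under a relation. -/
def rimage {α β : Type*} (f : Set (α × β)) (a : Set α) : Set β := {y | ∃ x ∈ a, (x, y) ∈ f}

/-- Composition of relations. -/
def rcomp {α β γ : Type*} (g : Set (β × γ)) (f : Set (α × β)) : Set (α × γ) :=
  {p | ∃ b, (p.1, b) ∈ f ∧ (b, p.2) ∈ g}

/-- Identity relation on a set. -/
def rid {α : Type*} (A : Set α) : Set (α × α) := {p | p.1 ∈ A ∧ p.1 = p.2}

/-!
A transport functor maps the inclusions `|𝒜ᵢ| ⊆ |ℬᵢ|` to the identity relation of `T(|𝒜|)`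
viewed as a relation into `T(|ℬ|)`, so `T(|𝒜|) ⊆ T(|ℬ|)`. Applying lax naturality of `ownᵢ`
to this inclusion, in both directions, shows that `ownᵢ` computed over `|𝒜|` and over `|ℬ|`
agree on `T(|𝒜|)`. Hence `T^own(𝒜)` and `T^own(ℬ)` test a set `s ⊆ T(|𝒜|)` against the
same images `ownᵢ[s] ⊆ |𝒜ᵢ|`, and both statements reduce to the hypotheses on each `𝒜ᵢ`, `ℬᵢ`.
-/

section Relations

variable {α β : Type*}

theorem rid_subset_prod {A B : Set α} (h : A ⊆ B) : rid A ⊆ A ×ˢ B :=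
  fun _ hp => ⟨hp.1, hp.2 ▸ h hp.1⟩

theorem rid_subset_prod_swap {A B : Set α} (h : A ⊆ B) : rid A ⊆ B ×ˢ A :=
  fun _ hp => ⟨h hp.1, hp.2 ▸ hp.1⟩

theorem mem_rcomp_rid {f : Set (α × β)} {A : Set α} {x : α} {y : β} (hx : x ∈ A)
    (h : (x, y) ∈ f) : (x, y) ∈ rcomp f (rid A) :=
  ⟨x, ⟨hx, rfl⟩, h⟩

theorem rimage_subset_of_subset_prod {f : Set (α × β)} {A : Set α} {B : Set β}
    (hf : f ⊆ A ×ˢ B) (s : Set α) : rimage f s ⊆ B :=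
  fun _ ⟨_, _, hxy⟩ => (hf hxy).2

end Relations

section Transport

variable {α β I : Type*} {Tobj : (I → Set α) → Set β} {Tmap : (I → Set (α × α)) → Set (β × β)}
  {own : I → (I → Set α) → Set (β × α)}

theorem tobj_mono
    (hT_sub : ∀ (A B : I → Set α) (f : I → Set (α × α)),
      (∀ i, f i ⊆ A i ×ˢ B i) → Tmap f ⊆ Tobj A ×ˢ Tobj B)
    (hT_id : ∀ A : I → Set α, Tmap (fun i => rid (A i)) = rid (Tobj A))
    {A B : I → Set α} (hAB : ∀ i, A i ⊆ B i) : Tobj A ⊆ Tobj B := by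
  intro x hx
  have h := hT_sub A B (fun j => rid (A j)) fun j => rid_subset_prod (hAB j)
  rw [hT_id] at h
  exact (h (⟨hx, rfl⟩ : (x, x) ∈ rid (Tobj A))).2

theorem mem_own_of_mem_own
    (hT_id : ∀ A : I → Set α, Tmap (fun i => rid (A i)) = rid (Tobj A))
    (hown_lax : ∀ i (A B : I → Set α) (g : I → Set (α × α)),
      (∀ j, g j ⊆ A j ×ˢ B j) →
      rcomp (own i B) (Tmap g) ⊆ rcomp (g i) (own i A))
    {A B C : I → Set α} (hC : ∀ j, rid (C j) ⊆ B j ×ˢ A j) (i : I) {x : β} {y : α}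
    (hx : x ∈ Tobj C) (h : (x, y) ∈ own i A) : (x, y) ∈ own i B := by
  have hlax := hown_lax i B A (fun j => rid (C j)) hC
  rw [hT_id] at hlax
  obtain ⟨z, hxz, -, hzy⟩ := hlax (mem_rcomp_rid hx h)
  exact (show z = y from hzy) ▸ hxz

theorem rimage_own_eq
    (hT_id : ∀ A : I → Set α, Tmap (fun i => rid (A i)) = rid (Tobj A))
    (hown_lax : ∀ i (A B : I → Set α) (g : I → Set (α × α)),
      (∀ j, g j ⊆ A j ×ˢ B j) →
      rcomp (own i B) (Tmap g) ⊆ rcomp (g i) (own i A))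
    {A B : I → Set α} (hAB : ∀ i, A i ⊆ B i) (i : I) {s : Set β} (hs : s ⊆ Tobj A) :
    rimage (own i A) s = rimage (own i B) s := by
  ext y
  constructor
  · rintro ⟨x, hxs, hx⟩
    exact ⟨x, hxs, mem_own_of_mem_own hT_id hown_lax
      (fun j => rid_subset_prod_swap (hAB j)) i (hs hxs) hx⟩
  · rintro ⟨x, hxs, hx⟩
    exact ⟨x, hxs, mem_own_of_mem_own hT_id hown_lax
      (fun j => rid_subset_prod (hAB j)) i (hs hxs) hx⟩

variable (Tobj own) in
/-- The finiteness structure of `T^own(𝒜)`. -/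
def transportFin (𝒜 : I → FinSpace α) : Set (Set β) :=
  {s | s ⊆ Tobj (fun i => (𝒜 i).web) ∧ ∀ i, rimage (own i fun j => (𝒜 j).web) s ∈ (𝒜 i).fin}

variable
    (hT_sub : ∀ (A B : I → Set α) (f : I → Set (α × α)),
      (∀ i, f i ⊆ A i ×ˢ B i) → Tmap f ⊆ Tobj A ×ˢ Tobj B)
    (hT_id : ∀ A : I → Set α, Tmap (fun i => rid (A i)) = rid (Tobj A))
    (hown_lax : ∀ i (A B : I → Set α) (g : I → Set (α × α)),
      (∀ j, g j ⊆ A j ×ˢ B j) →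
      rcomp (own i B) (Tmap g) ⊆ rcomp (g i) (own i A))
    {𝒜 ℬ : I → FinSpace α}

include hT_sub hT_id hown_lax in
theorem transportFin_subset (hweb : ∀ i, (𝒜 i).web ⊆ (ℬ i).web)
    (hfin : ∀ i, (𝒜 i).fin ⊆ (ℬ i).fin) :
    transportFin Tobj own 𝒜 ⊆ transportFin Tobj own ℬ := by
  rintro s ⟨hsA, hs𝒜⟩
  refine ⟨hsA.trans (tobj_mono hT_sub hT_id hweb), fun i => ?_⟩
  rw [← rimage_own_eq hT_id hown_lax hweb i hsA]
  exact hfin i (hs𝒜 i)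

include hT_sub hT_id hown_lax in
theorem transportFin_eq_of_extension
    (hown_sub : ∀ i (A : I → Set α), own i A ⊆ Tobj A ×ˢ A i)
    (hweb : ∀ i, (𝒜 i).web ⊆ (ℬ i).web)
    (hfin : ∀ i, (𝒜 i).fin = {a ∈ (ℬ i).fin | a ⊆ (𝒜 i).web}) :
    transportFin Tobj own 𝒜 = {s ∈ transportFin Tobj own ℬ | s ⊆ Tobj fun i => (𝒜 i).web} := by
  refine Subset.antisymm (fun s hs => ⟨?_, hs.1⟩) ?_
  · refine transportFin_subset hT_sub hT_id hown_lax hweb (fun i => ?_) hs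
    rw [hfin i]
    exact sep_subset _ _
  · rintro s ⟨⟨-, hsℬ⟩, hsA⟩
    refine ⟨hsA, fun i => ?_⟩
    have hsame := rimage_own_eq hT_id hown_lax hweb i hsA
    rw [hfin i]
    exact ⟨hsame ▸ hsℬ i, rimage_subset_of_subset_prod (hown_sub i _) s⟩

end Transport

theorem transport_functor_monotone_general
    {α β : Type*} {I : Type*}
    (Tobj : (I → Set α) → Set β)
    (Tmap : (I → Set (α × α)) → Set (β × β))
    (hT_sub : ∀ (A B : I → Set α) (f : I → Set (α × α)),
      (∀ i, f i ⊆ A i ×ˢ B i) → Tmap f ⊆ Tobj A ×ˢ Tobj B)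
    (hT_id : ∀ A : I → Set α, Tmap (fun i => rid (A i)) = rid (Tobj A))
    (own : I → (I → Set α) → Set (β × α))
    (hown_sub : ∀ i (A : I → Set α), own i A ⊆ Tobj A ×ˢ A i)
    (hown_lax : ∀ i (A B : I → Set α) (g : I → Set (α × α)),
      (∀ j, g j ⊆ A j ×ˢ B j) →
      rcomp (own i B) (Tmap g) ⊆ rcomp (g i) (own i A))
    (𝒜 ℬ : I → FinSpace α) :
    let TA : Set β := Tobj fun i => (𝒜 i).web
    let TB : Set β := Tobj fun i => (ℬ i).web
    let FA : Set (Set β) :=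
      {s | s ⊆ TA ∧ ∀ i, rimage (own i fun j => (𝒜 j).web) s ∈ (𝒜 i).fin}
    let FB : Set (Set β) :=
      {s | s ⊆ TB ∧ ∀ i, rimage (own i fun j => (ℬ j).web) s ∈ (ℬ i).fin}
    -- monotonicity for finiteness inclusion
    ((∀ i, (𝒜 i).web ⊆ (ℬ i).web ∧ (𝒜 i).fin ⊆ (ℬ i).fin) →
      TA ⊆ TB ∧ FA ⊆ FB) ∧
    -- monotonicity for finiteness extension
    ((∀ i, (𝒜 i).web ⊆ (ℬ i).web ∧ (𝒜 i).fin = {a ∈ (ℬ i).fin | a ⊆ (𝒜 i).web}) →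
      TA ⊆ TB ∧ FA = {s ∈ FB | s ⊆ TA}) := by
  intro TA TB FA FB
  refine ⟨fun h => ⟨?_, ?_⟩, fun h => ⟨?_, ?_⟩⟩
  · exact tobj_mono hT_sub hT_id fun i => (h i).1
  · exact transportFin_subset hT_sub hT_id hown_lax (fun i => (h i).1) fun i => (h i).2
  · exact tobj_mono hT_sub hT_id fun i => (h i).1
  · exact transportFin_eq_of_extension hT_sub hT_id hown_lax hown_sub (fun i => (h i).1)
      fun i => (h i).2

/-- Transport functors are monotonic for both finiteness inclusion `⊑` and
finiteness extension `≼`: given an `I`-ary functor in Rel with an ownership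
relation, if `𝒜ᵢ ⊑ ℬᵢ` (resp. `𝒜ᵢ ≼ ℬᵢ`) for all `i`, then
`T^own(𝒜) ⊑ T^own(ℬ)` (resp. `T^own(𝒜) ≼ T^own(ℬ)`). -/
theorem transport_functor_monotone
    {α β : Type*} {I : Type*}
    (Tobj : (I → Set α) → Set β)
    (Tmap : (I → Set (α × α)) → Set (β × β))
    (hT_sub : ∀ (A B : I → Set α) (f : I → Set (α × α)),
      (∀ i, f i ⊆ A i ×ˢ B i) → Tmap f ⊆ Tobj A ×ˢ Tobj B)
    (hT_id : ∀ A : I → Set α, Tmap (fun i => rid (A i)) = rid (Tobj A))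
    (hT_comp : ∀ f g : I → Set (α × α),
      Tmap (fun i => rcomp (g i) (f i)) = rcomp (Tmap g) (Tmap f))
    (own : I → (I → Set α) → Set (β × α))
    (hown_sub : ∀ i (A : I → Set α), own i A ⊆ Tobj A ×ˢ A i)
    (hown_qf : ∀ i (A : I → Set α) (x : β), (rimage (own i A) {x}).Finite)
    (hown_lax : ∀ i (A B : I → Set α) (g : I → Set (α × α)),
      (∀ j, g j ⊆ A j ×ˢ B j) →
      rcomp (own i B) (Tmap g) ⊆ rcomp (g i) (own i A))
    (𝒜 ℬ : I → FinSpace α) :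
    let TA : Set β := Tobj fun i => (𝒜 i).web
    let TB : Set β := Tobj fun i => (ℬ i).web
    let FA : Set (Set β) :=
      {s | s ⊆ TA ∧ ∀ i, rimage (own i fun j => (𝒜 j).web) s ∈ (𝒜 i).fin}
    let FB : Set (Set β) :=
      {s | s ⊆ TB ∧ ∀ i, rimage (own i fun j => (ℬ j).web) s ∈ (ℬ i).fin}
    -- monotonicity for finiteness inclusion
    ((∀ i, (𝒜 i).web ⊆ (ℬ i).web ∧ (𝒜 i).fin ⊆ (ℬ i).fin) →
      TA ⊆ TB ∧ FA ⊆ FB) ∧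
    -- monotonicity for finiteness extension
    ((∀ i, (𝒜 i).web ⊆ (ℬ i).web ∧ (𝒜 i).fin = {a ∈ (ℬ i).fin | a ⊆ (𝒜 i).web}) →
      TA ⊆ TB ∧ FA = {s ∈ FB | s ⊆ TA}) :=
  transport_functor_monotone_general Tobj Tmap hT_sub hT_id own hown_sub hown_lax 𝒜 ℬ

end FinitenessPaper
end

section
/- Injections into and case analysis on the lifted sum are finitary: let (𝒜_i)_{i∈I} and ℬ be finiteness spaces. Define the lifted sum ⊕ˡ(𝒜_i) as the finiteness space with web I ∪ Σ_{i∈I}|𝒜_i| (disjoint union, Σ_{i∈I}A_i = {(i,α) : i ∈ I, α ∈ A_i}) and finitary subsets {J ∪ Σ_{i∈K} a_i : J ∪ K a finite subset of I and a_i ∈ F(𝒜_i) for all i ∈ K}. Then: (1) for each i ∈ I, the multirelation inj_i = {([], i)} ∪ {([α], (i,α)) : α ∈ |𝒜_i|} belongs to F(𝒜_i ⇒ ⊕ˡ(𝒜_j)); (2) the multirelation case = {([i] + [(i,α_1),…,(i,α_n)], ([(i, ([α_1,…,α_n], β))], β)) : i ∈ I, n ∈ ℕ, α_1,…,α_n ∈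 |𝒜_i|, β ∈ |ℬ|} belongs to F(⊕ˡ(𝒜_j) ⇒ ((&_{i∈I}(𝒜_i ⇒ ℬ)) ⇒ ℬ)). -/
open Set

namespace FinitenessPaper

/-- The finiteness structure of the exponential `!`, given by web and structure. -/
def bangFinS {α : Type*} (W : Set α) (F : Set (Set α)) : Set (Set (Multiset α)) :=
  {s | s ⊆ bangSet W ∧ (⋃ μ ∈ s, {x : α | x ∈ μ}) ∈ F}

/-- The finiteness structure of the tensor product, given by webs and structures. -/
def tensFin {α β : Type*} (Wa : Set α) (Fa : Set (Set α)) (Wb : Set β)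
    (Fb : Set (Set β)) : Set (Set (α × β)) :=
  {c | c ⊆ Wa ×ˢ Wb ∧ Prod.fst '' c ∈ Fa ∧ Prod.snd '' c ∈ Fb}

/-- The finiteness structure of `𝒜 ⇒ ℬ = !𝒜 ⊸ ℬ = (!𝒜 ⊗ ℬ^⊥)^⊥`,
given by webs and structures. -/
def impFinS {α β : Type*} (Wa : Set α) (Fa : Set (Set α)) (Wb : Set β)
    (Fb : Set (Set β)) : Set (Set (Multiset α × β)) :=
  predual (bangSet Wa ×ˢ Wb)
    (tensFin (bangSet Wa) (bangFinS Wa Fa) Wb (predual Wb Fb))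

/-- The web of the lifted sum `⊕ˡᵢ 𝒜ᵢ`: the tokens `i ∈ I` together with the
pairs `(i, α)` with `α ∈ |𝒜ᵢ|`. -/
def loplusWeb {α : Type*} {I : Type*} (𝒜 : I → FinSpace α) : Set (I ⊕ I × α) :=
  Set.range Sum.inl ∪ {x | ∃ i a, a ∈ (𝒜 i).web ∧ x = Sum.inr (i, a)}

/-- The finiteness structure of the lifted sum: sets of the form
`J ∪ Σ_{i∈K} aᵢ` with `J ∪ K` a finite subset of `I` and `aᵢ ∈ F(𝒜ᵢ)`. -/
def loplusFin {α : Type*} {I : Type*} (𝒜 : I → FinSpace α) :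
    Set (Set (I ⊕ I × α)) :=
  {s | ∃ (J K : Set I) (a : I → Set α), (J ∪ K).Finite ∧
    (∀ i ∈ K, a i ∈ (𝒜 i).fin) ∧
    s = Sum.inl '' J ∪ ⋃ i ∈ K, (fun x => (Sum.inr (i, x) : I ⊕ I × α)) '' a i}

/-- The injection `injᵢ = {([], i)} ∪ {([α], (i,α)) : α ∈ |𝒜ᵢ|}`. -/
def injRel {α : Type*} {I : Type*} (𝒜 : I → FinSpace α) (i : I) :
    Set (Multiset α × (I ⊕ I × α)) :=
  {((0 : Multiset α), Sum.inl i)} ∪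
    {q | ∃ a ∈ (𝒜 i).web, q = (({a} : Multiset α), (Sum.inr (i, a) : I ⊕ I × α))}

/-- The web of the product `&ᵢ (𝒜ᵢ ⇒ ℬ)`. -/
def withImpWeb {α β : Type*} {I : Type*} (𝒜 : I → FinSpace α) (B : FinSpace β) :
    Set (I × (Multiset α × β)) :=
  {q | q.2 ∈ bangSet (𝒜 q.1).web ×ˢ B.web}

/-- The finiteness structure of the product `&ᵢ (𝒜ᵢ ⇒ ℬ)`: sets all of whose
restrictions are finitary. -/
def withImpFin {α β : Type*} {I : Type*} (𝒜 : I → FinSpace α) (B : FinSpace β) :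
    Set (Set (I × (Multiset α × β))) :=
  {c | c ⊆ withImpWeb 𝒜 B ∧
    ∀ i, {p | (i, p) ∈ c} ∈ impFinS (𝒜 i).web (𝒜 i).fin B.web B.fin}

/-- The case-analysis multirelation
`case = {([i] + [(i,α₁),…,(i,αₙ)], ([(i, ([α₁,…,αₙ], β))], β))}`. -/
def caseRel {α β : Type*} {I : Type*} (𝒜 : I → FinSpace α) (B : FinSpace β) :
    Set (Multiset (I ⊕ I × α) × (Multiset (I × (Multiset α × β)) × β)) :=
  {q | ∃ (i : I) (L : List α) (b : β), (∀ x ∈ L, x ∈ (𝒜 i).web) ∧ b ∈ B.web ∧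
    q = ((Sum.inl i : I ⊕ I × α) ::ₘ
          ((L.map fun x => (Sum.inr (i, x) : I ⊕ I × α)) : Multiset (I ⊕ I × α)),
        (({(i, ((L : Multiset α), b))} : Multiset (I × (Multiset α × β))), b))}

/-!
Both relations are finitary for the same reason: a point of each relation is determined by
its output, so for `c` in `!𝒜 ⊗ ℬ^⊥` the intersection with `c` injects into `π₂[c] ∩ s`, where
`s` is a finitary set containing every output of an input supported in `u = ⋃ π₁[c] ∈ F(𝒜)`.
For `injᵢ` one takes `s = {i} ∪ {i} × u`. For `case`, a finitary `u` of the lifted sum meets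
only finitely many tokens `i`, each with a finitary slice `aᵢ`, and `s` is the finite union of
the relations `{([(i, (μ, β))], β) : μ ∈ aᵢ^!}`; each of these is finitary because the `i`-th
component of a finitary set of `&ᵢ (𝒜ᵢ ⇒ ℬ)` is finitary in `𝒜ᵢ ⇒ ℬ`.
-/

section Predual

variable {α : Type*} {A : Set α} {F : Set (Set α)}

lemma mem_predual_of_subset_s19 {a a' : Set α} (h : a ∈ predual A F) (hsub : a' ⊆ a) :
    a' ∈ predual A F :=
  ⟨hsub.trans h.1, fun b hb => (h.2 b hb).subset fun _ hx => ⟨hx.1, hsub hx.2⟩⟩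

lemma biUnion_mem_predual {ι : Type*} {J : Set ι} (hJ : J.Finite) {s : ι → Set α}
    (hs : ∀ i ∈ J, s i ∈ predual A F) : ⋃ i ∈ J, s i ∈ predual A F := by
  refine ⟨iUnion₂_subset fun i hi => (hs i hi).1, fun a ha => ?_⟩
  rw [inter_iUnion₂]
  exact hJ.biUnion fun i hi => (hs i hi).2 a ha

end Predual

namespace FinSpace

variable {α : Type*} (𝒜 : FinSpace α)

lemma subset_web_s19 {s : Set α} (hs : s ∈ 𝒜.fin) : s ⊆ 𝒜.web := by
  rw [← 𝒜.isFin] at hs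
  exact hs.1

lemma mem_fin_of_subset_s19 {s t : Set α} (hs : s ∈ 𝒜.fin) (h : t ⊆ s) : t ∈ 𝒜.fin := by
  rw [← 𝒜.isFin] at hs ⊢
  exact mem_predual_of_subset_s19 hs h

lemma empty_mem_fin : (∅ : Set α) ∈ 𝒜.fin := by
  rw [← 𝒜.isFin]
  exact ⟨empty_subset _, fun _ _ => by simp⟩

end FinSpace

lemma bangSet_mono {α : Type*} {a b : Set α} (h : a ⊆ b) : bangSet a ⊆ bangSet b :=
  fun _ hμ x hx => h (hμ x hx)

lemma bangSet_prod_mem_tensFin {α β : Type*} (𝒜 : FinSpace α) {Wb : Set β}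
    {Fb : Set (Set β)} {a : Set α} (ha : a ∈ 𝒜.fin) {t : Set β} (ht : t ∈ predual Wb Fb) :
    bangSet a ×ˢ t ∈ tensFin (bangSet 𝒜.web) (bangFinS 𝒜.web 𝒜.fin) Wb (predual Wb Fb) := by
  have haW := bangSet_mono (𝒜.subset_web_s19 ha)
  refine ⟨prod_mono haW ht.1, ⟨?_, 𝒜.mem_fin_of_subset_s19 ha ?_⟩,
    mem_predual_of_subset_s19 ht (snd_image_prod_subset _ _)⟩
  · exact (fst_image_prod_subset _ _).trans haW
  · simp only [iUnion_subset_iff]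
    rintro _ ⟨⟨μ, b⟩, ⟨hμ, -⟩, rfl⟩ x hx
    exact hμ x hx

lemma mem_impFinS_of_injOn_snd {α β : Type*} {Wa : Set α} {Fa : Set (Set α)} {Wb : Set β}
    {Fb : Set (Set β)} {R : Set (Multiset α × β)} (hR : R ⊆ bangSet Wa ×ˢ Wb)
    (hinj : InjOn Prod.snd R)
    (himage : ∀ u ∈ Fa, ∃ s ∈ Fb, ∀ q ∈ R, q.1 ∈ bangSet u → q.2 ∈ s) :
    R ∈ impFinS Wa Fa Wb Fb := by
  refine ⟨hR, ?_⟩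
  rintro c ⟨-, ⟨-, hu⟩, hc⟩
  obtain ⟨s, hs, hRs⟩ := himage _ hu
  refine Finite.of_finite_image ((hc.2 s hs).subset ?_) (hinj.mono inter_subset_right)
  rintro _ ⟨q, ⟨hqc, hqR⟩, rfl⟩
  exact ⟨hRs q hqR fun x hx => mem_biUnion (mem_image_of_mem _ hqc) hx, mem_image_of_mem _ hqc⟩

section LiftedSum

variable {α β : Type*} {I : Type*} (𝒜 : I → FinSpace α)

lemma insert_inl_image_inr_mem_loplusFin {i : I} {u : Set α} (hu : u ∈ (𝒜 i).fin) :
    insert (Sum.inl i) ((fun x => (Sum.inr (i, x) : I ⊕ I × α)) '' u) ∈ loplusFin 𝒜 :=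
  ⟨{i}, {i}, fun _ => u, by simp, by simpa, by ext; simp⟩

lemma loplusFin_tokens_finite_and_slices_mem_fin {s : Set (I ⊕ I × α)} (hs : s ∈ loplusFin 𝒜) :
    {i | Sum.inl i ∈ s}.Finite ∧ ∀ i, {x | Sum.inr (i, x) ∈ s} ∈ (𝒜 i).fin := by
  obtain ⟨J, K, a, hJK, ha, rfl⟩ := hs
  refine ⟨hJK.subset fun i hi => Or.inl (by simpa using hi), fun i => ?_⟩
  by_cases hi : i ∈ K
  · exact (𝒜 i).mem_fin_of_subset_s19 (ha i hi) fun x hx => by simp_all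
  · convert (𝒜 i).empty_mem_fin
    ext x
    simp [hi]

lemma injRel_mem_impFinS (i : I) :
    injRel 𝒜 i ∈ impFinS (𝒜 i).web (𝒜 i).fin (loplusWeb 𝒜) (loplusFin 𝒜) := by
  refine mem_impFinS_of_injOn_snd ?_ ?_ fun u hu =>
    ⟨_, insert_inl_image_inr_mem_loplusFin 𝒜 hu, ?_⟩
  · rintro _ (rfl | ⟨x, hx, rfl⟩)
    · exact ⟨fun _ hy => absurd hy (Multiset.notMem_zero _), Or.inl ⟨i, rfl⟩⟩
    · exact ⟨fun y hy => Multiset.mem_singleton.mp hy ▸ hx, Or.inr ⟨i, x, hx, rfl⟩⟩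
  · rintro _ (rfl | ⟨x, -, rfl⟩) _ (rfl | ⟨y, -, rfl⟩) h <;> simp_all
  · rintro _ (rfl | ⟨x, -, rfl⟩) hq
    · exact mem_insert _ _
    · exact mem_insert_of_mem _ (mem_image_of_mem _ (hq x (Multiset.mem_singleton_self x)))

def evalRel (B : FinSpace β) (i : I) (a : Set α) :
    Set (Multiset (I × (Multiset α × β)) × β) :=
  (fun p => ({(i, p)}, p.2)) '' (bangSet a ×ˢ B.web)

lemma evalRel_mem_impFinS (B : FinSpace β) {i : I} {a : Set α} (ha : a ∈ (𝒜 i).fin) :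
    evalRel B i a ∈ impFinS (withImpWeb 𝒜 B) (withImpFin 𝒜 B) B.web B.fin := by
  refine ⟨?_, ?_⟩
  · rintro _ ⟨⟨μ, b⟩, ⟨hμ, hb⟩, rfl⟩
    refine ⟨fun x hx => ?_, hb⟩
    rw [Multiset.mem_singleton.mp hx]
    exact ⟨bangSet_mono ((𝒜 i).subset_web_s19 ha) hμ, hb⟩
  rintro e ⟨-, ⟨-, hv⟩, he⟩
  have hslice := (hv.2 i).2 _ (bangSet_prod_mem_tensFin (𝒜 i) ha he)
  refine (hslice.image fun p => (({(i, p)} : Multiset _), p.2)).subset ?_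
  rintro _ ⟨hpe, p, hp, rfl⟩
  refine ⟨p, ⟨⟨hp.1, mem_image_of_mem _ hpe⟩, ?_⟩, rfl⟩
  exact mem_biUnion (mem_image_of_mem _ hpe) (Multiset.mem_singleton_self _)

lemma caseRel_mem_impFinS (B : FinSpace β) :
    caseRel 𝒜 B ∈ impFinS (loplusWeb 𝒜) (loplusFin 𝒜) (bangSet (withImpWeb 𝒜 B) ×ˢ B.web)
      (impFinS (withImpWeb 𝒜 B) (withImpFin 𝒜 B) B.web B.fin) := by
  refine mem_impFinS_of_injOn_snd ?_ ?_ fun u hu => ?_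
  · rintro _ ⟨i, L, b, hL, hb, rfl⟩
    refine ⟨fun x hx => ?_, fun x hx => ?_, hb⟩
    · dsimp only at hx
      rcases Multiset.mem_cons.mp hx with rfl | hx
      · exact Or.inl ⟨i, rfl⟩
      · obtain ⟨y, hy, rfl⟩ := List.mem_map.mp (Multiset.mem_coe.mp hx)
        exact Or.inr ⟨i, y, hL y hy, rfl⟩
    · rw [Multiset.mem_singleton.mp hx]
      exact ⟨fun y hy => hL y (Multiset.mem_coe.mp hy), hb⟩
  · rintro _ ⟨i, L, b, -, -, rfl⟩ _ ⟨j, L', b', -, -, rfl⟩ h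
    simp only [Prod.mk.injEq, Multiset.singleton_inj] at h
    obtain ⟨⟨rfl, hL, rfl⟩, -⟩ := h
    simp only [← Multiset.map_coe, hL]
  · obtain ⟨htokens, hslices⟩ := loplusFin_tokens_finite_and_slices_mem_fin 𝒜 hu
    refine ⟨⋃ i ∈ {i | Sum.inl i ∈ u}, evalRel B i {x | Sum.inr (i, x) ∈ u},
      biUnion_mem_predual htokens fun i _ => evalRel_mem_impFinS 𝒜 B (hslices i), ?_⟩
    rintro _ ⟨i, L, b, -, hb, rfl⟩ hq
    dsimp only at hq ⊢
    refine mem_biUnion (x := i) (hq _ (Multiset.mem_cons_self _ _))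
      ⟨(L, b), ⟨fun x hx => ?_, hb⟩, rfl⟩
    exact hq _ (Multiset.mem_cons_of_mem
      (Multiset.mem_coe.mpr (List.mem_map_of_mem (Multiset.mem_coe.mp hx))))

end LiftedSum

/-- Injections into, and case analysis on, the lifted sum are finitary:
`injᵢ ∈ F(𝒜ᵢ ⇒ ⊕ˡⱼ 𝒜ⱼ)` and
`case ∈ F(⊕ˡⱼ 𝒜ⱼ ⇒ ((&ᵢ (𝒜ᵢ ⇒ ℬ)) ⇒ ℬ))`. -/
theorem inj_case_finitary {α β : Type*} {I : Type*}
    (𝒜 : I → FinSpace α) (B : FinSpace β) :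
    (∀ i : I, injRel 𝒜 i ∈
      impFinS (𝒜 i).web (𝒜 i).fin (loplusWeb 𝒜) (loplusFin 𝒜)) ∧
    caseRel 𝒜 B ∈
      impFinS (loplusWeb 𝒜) (loplusFin 𝒜)
        (bangSet (withImpWeb 𝒜 B) ×ˢ B.web)
        (impFinS (withImpWeb 𝒜 B) (withImpFin 𝒜 B) B.web B.fin) :=
  ⟨injRel_mem_impFinS 𝒜, caseRel_mem_impFinS 𝒜 B⟩

end FinitenessPaper
end
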